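/- Let f_Q be a Q-level quantizer satisfying the Lloyd–Max stationarity condition, i.e., ∫_{τ_i}^{τ_{i+1}} (m_i − τ) φ(τ) dτ = 0 for every i = 1, …, Q, and set μ = E[f_Q(g) g] and e_Q = E[(f_Q(g) − g)²]. Then σ² := E[(f_Q(g) − μ g)²] = μ − μ² = e_Q − e_Q². -/

import Mathlib

noncomputable section
open MeasureTheory ProbabilityTheory Real Set

/-- The standard Gaussian measure on `ℝ`. -/
def stdGauss : Measure ℝ := gaussianReal 0 1

instance : IsProbabilityMeasure stdGauss := by unfold stdGauss; infer_instance

/-- A `Q`-level quantizer: thresholds `-∞ = τ₁ < τ₂ < … < τ_{Q+1} = +∞` (indexed here by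
`Fin (Q+1)`, so `τ 0 = ⊥` and `τ (Fin.last Q) = ⊤`) and values `m₁, …, m_Q`, with the
step function `f` equal to `m i` on the cell `[τ i, τ (i+1))`. -/
structure Quantizer (Q : ℕ) where
  m : Fin Q → ℝ
  τ : Fin (Q + 1) → EReal
  f : ℝ → ℝ
  τ_bot : τ 0 = ⊥
  τ_top : τ (Fin.last Q) = ⊤
  τ_mono : StrictMono τ
  f_eq : ∀ (i : Fin Q) (t : ℝ), τ i.castSucc ≤ (t : EReal) → (t : EReal) < τ i.succ → f t = m i

/-- The `i`-th quantization cell `[τ_i, τ_{i+1})` (as a subset of `ℝ`). -/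
def Quantizer.cell {Q : ℕ} (q : Quantizer Q) (i : Fin Q) : Set ℝ :=
  {t : ℝ | q.τ i.castSucc ≤ (t : EReal) ∧ (t : EReal) < q.τ i.succ}

/-- The mean squared error `E[(f_Q(g) - g)²]` of a quantizer. -/
def MSE {Q : ℕ} (q : Quantizer Q) : ℝ := ∫ t, (q.f t - t) ^ 2 ∂stdGauss

/-- Lloyd–Max stationarity: `∫_{τ_i}^{τ_{i+1}} (m_i − τ) φ(τ) dτ = 0` for every cell,
written as an integral against the standard Gaussian measure. -/
def LloydMaxStationary {Q : ℕ} (q : Quantizer Q) : Prop :=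
  ∀ i : Fin Q, ∫ t in q.cell i, (q.m i - t) ∂stdGauss = 0

open Function

/-! Stationarity makes each value `m_i` the Gaussian mean of `g` over its cell, so
`E[f(g) (f(g) - g)] = 0`, i.e. `E[f(g)²] = E[f(g) g] = μ`. Expanding the squares with `E[g²] = 1`
gives `σ² = μ - 2μ² + μ² = μ - μ²` and `e_Q = μ - 2μ + 1 = 1 - μ`, so `e_Q - e_Q² = μ (1 - μ)`. -/

theorem Fin.exists_castSucc_le_and_lt_succ {α : Type*} [LinearOrder α] {n : ℕ}
    (τ : Fin (n + 1) → α) {x : α} (h0 : τ 0 ≤ x) (hlast : x < τ (Fin.last n)) :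
    ∃ i : Fin n, τ i.castSucc ≤ x ∧ x < τ i.succ := by
  induction n with
  | zero => exact absurd (h0.trans_lt hlast) (lt_irrefl _)
  | succ n ih =>
    by_cases h : x < τ (Fin.last n).castSucc
    · obtain ⟨i, hi⟩ := ih (τ ∘ Fin.castSucc) h0 h
      exact ⟨i.castSucc, hi⟩
    · exact ⟨Fin.last n, not_lt.1 h, hlast⟩

theorem Fin.pairwise_disjoint_on_Ico_castSucc_succ {α : Type*} [Preorder α] {n : ℕ}
    {τ : Fin (n + 1) → α} (hτ : Monotone τ) :
    Pairwise (Disjoint on fun i : Fin n => Ico (τ i.castSucc) (τ i.succ)) := by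
  intro i j hij
  wlog h : i < j generalizing i j
  · exact (this hij.symm (hij.lt_or_gt.resolve_left h)).symm
  exact Set.disjoint_left.2 fun t hi hj =>
    (hi.2.trans_le (hτ (Fin.succ_le_castSucc_iff.2 h))).not_ge hj.1

theorem integral_sub_const_mul_sq {α : Type*} [MeasurableSpace α] {ν : Measure α}
    {F X : α → ℝ} (hF : MemLp F 2 ν) (hX : MemLp X 2 ν) (c : ℝ) :
    ∫ a, (F a - c * X a) ^ 2 ∂ν
      = ∫ a, F a ^ 2 ∂ν - 2 * c * ∫ a, F a * X a ∂ν + c ^ 2 * ∫ a, X a ^ 2 ∂ν := by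
  have hFX : Integrable (fun a => F a * X a) ν := hF.integrable_mul hX
  have hexpand : (fun a => (F a - c * X a) ^ 2)
      = fun a => F a ^ 2 - 2 * c * (F a * X a) + c ^ 2 * X a ^ 2 := by
    funext a; ring
  have hFX' : Integrable (fun a => F a ^ 2 - 2 * c * (F a * X a)) ν :=
    hF.integrable_sq.sub (hFX.const_mul _)
  rw [hexpand, integral_add hFX' (hX.integrable_sq.const_mul _),
    integral_sub hF.integrable_sq (hFX.const_mul _), integral_const_mul, integral_const_mul]

theorem integral_sq_stdGauss : ∫ t, t ^ 2 ∂stdGauss = 1 := by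
  have h := variance_eq_sub (memLp_id_gaussianReal' (μ := 0) (v := 1) 2 (by norm_num))
  simp only [variance_id_gaussianReal, NNReal.coe_one] at h
  simpa [stdGauss] using h.symm

namespace Quantizer

variable {Q : ℕ} (q : Quantizer Q)

theorem measurableSet_cell (i : Fin Q) : MeasurableSet (q.cell i) :=
  measurable_coe_real_ereal measurableSet_Ico

theorem pairwise_disjoint_cell : Pairwise (Disjoint on q.cell) := fun _ _ hij =>
  ((Fin.pairwise_disjoint_on_Ico_castSucc_succ q.τ_mono.monotone) hij).preimage _

theorem exists_mem_cell (t : ℝ) : ∃ i, t ∈ q.cell i :=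
  Fin.exists_castSucc_le_and_lt_succ q.τ (q.τ_bot ▸ bot_le) (q.τ_top ▸ EReal.coe_lt_top t)

theorem iUnion_cell : ⋃ i, q.cell i = univ :=
  eq_univ_of_forall fun t => mem_iUnion.2 (q.exists_mem_cell t)

theorem f_eq_sum_indicator : q.f = fun t => ∑ i, (q.cell i).indicator (fun _ => q.m i) t := by
  funext t
  obtain ⟨i, hi⟩ := q.exists_mem_cell t
  rw [q.f_eq i t hi.1 hi.2, Finset.sum_eq_single_of_mem i (Finset.mem_univ i)
    fun j _ hj => indicator_of_notMem (Set.disjoint_right.1 (q.pairwise_disjoint_cell hj) hi) _,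
    indicator_of_mem hi]

theorem measurable_f : Measurable q.f := by
  rw [q.f_eq_sum_indicator]
  exact Finset.measurable_sum _ fun i _ => measurable_const.indicator (q.measurableSet_cell i)

theorem abs_f_le_sum (t : ℝ) : |q.f t| ≤ ∑ i, |q.m i| := by
  obtain ⟨i, hi⟩ := q.exists_mem_cell t
  rw [q.f_eq i t hi.1 hi.2]
  exact Finset.single_le_sum (fun j _ => abs_nonneg (q.m j)) (Finset.mem_univ i)

theorem memLp_f (p : ENNReal) (ν : Measure ℝ) [IsFiniteMeasure ν] : MemLp q.f p ν :=
  MemLp.of_bound q.measurable_f.aestronglyMeasurable _ (ae_of_all _ q.abs_f_le_sum)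

theorem integral_f_mul_f_sub_eq_zero {ν : Measure ℝ}
    (hint : Integrable (fun t => q.f t * (q.f t - t)) ν)
    (hstat : ∀ i, ∫ t in q.cell i, (q.m i - t) ∂ν = 0) :
    ∫ t, q.f t * (q.f t - t) ∂ν = 0 := by
  rw [← setIntegral_univ, ← q.iUnion_cell,
    integral_iUnion_fintype q.measurableSet_cell q.pairwise_disjoint_cell fun _ => hint.integrableOn]
  refine Finset.sum_eq_zero fun i _ => ?_
  have hcell : EqOn (fun t => q.f t * (q.f t - t)) (fun t => q.m i * (q.m i - t)) (q.cell i) :=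
    fun t ht => by simp only [q.f_eq i t ht.1 ht.2]
  rw [setIntegral_congr_fun (q.measurableSet_cell i) hcell, integral_const_mul, hstat i, mul_zero]

end Quantizer

/-- Under Lloyd–Max stationarity, with `μ = E[f_Q(g) g]` and
`e_Q = E[(f_Q(g)-g)²]`, we have `σ² = E[(f_Q(g) - μ g)²] = μ - μ² = e_Q - e_Q²`. -/
theorem lloydMax_sigma_sq {Q : ℕ} (q : Quantizer Q)
    (hq : LloydMaxStationary q)
    (μ : ℝ) (hμ : μ = ∫ t, q.f t * t ∂stdGauss)
    (eQ : ℝ) (heQ : eQ = ∫ t, (q.f t - t) ^ 2 ∂stdGauss) :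
    (∫ t, (q.f t - μ * t) ^ 2 ∂stdGauss) = μ - μ ^ 2 ∧
    (∫ t, (q.f t - μ * t) ^ 2 ∂stdGauss) = eQ - eQ ^ 2 := by
  have hf : MemLp q.f 2 stdGauss := q.memLp_f 2 stdGauss
  have hid : MemLp (fun t : ℝ => t) 2 stdGauss := memLp_id_gaussianReal' 2 (by norm_num)
  have hfid : Integrable (fun t => q.f t * t) stdGauss := hf.integrable_mul hid
  have hsq : ∫ t, q.f t ^ 2 ∂stdGauss = μ := by
    have h := q.integral_f_mul_f_sub_eq_zero (hf.integrable_mul (hf.sub hid)) hq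
    simp only [mul_sub, ← sq] at h
    rwa [integral_sub hf.integrable_sq hfid, sub_eq_zero, ← hμ] at h
  have hσ := integral_sub_const_mul_sq hf hid μ
  have he := integral_sub_const_mul_sq hf hid 1
  simp only [one_mul] at he
  rw [hsq, ← hμ, integral_sq_stdGauss] at hσ he
  rw [← heQ] at he
  constructor
  · rw [hσ]; ring
  · rw [hσ, he]; ring
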